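/- For every b > 0, the expression D(k) := -2·(2(E(k) - K(k)) + k²·K(k)) / (π b k √(1-k²) (1 + √(1-k²))), which equals ∂_k κ^{b,k} for k ∈ (0,1), tends to 0 as k → 0 from the right: lim_{k→0⁺} D(k) = 0. -/

import Mathlib

/-!
On the quarter period, `2 (E - K) + k² K = ∫ k² (1 - 2 sin² u) / √(1 - k² sin² u) du`, whose
integrand is bounded by `k² / √(1 - k²)`. Hence the numerator of `D(k)` is `O(k²)` while its
denominator is of exact order `k`, and `D(k) = O(k)`.
-/

open Real Filter

/-- Complete elliptic integral of the first kind. -/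
noncomputable def ellK (k : ℝ) : ℝ :=
  ∫ u in (0:ℝ)..(π/2), 1 / Real.sqrt (1 - k^2 * Real.sin u ^ 2)

/-- Complete elliptic integral of the second kind. -/
noncomputable def ellE (k : ℝ) : ℝ :=
  ∫ u in (0:ℝ)..(π/2), Real.sqrt (1 - k^2 * Real.sin u ^ 2)

open Topology Interval intervalIntegral

lemma one_sub_sq_mul_sin_sq_pos {k : ℝ} (hk : k ^ 2 < 1) (u : ℝ) :
    0 < 1 - k ^ 2 * sin u ^ 2 := by
  nlinarith [sin_sq_le_one u, sq_nonneg (sin u), sq_nonneg k]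

lemma two_mul_ellE_sub_ellK_add_sq_mul_ellK {k : ℝ} (hk : k ^ 2 < 1) :
    2 * (ellE k - ellK k) + k ^ 2 * ellK k =
      ∫ u in (0 : ℝ)..(π / 2), k ^ 2 * (1 - 2 * sin u ^ 2) / √(1 - k ^ 2 * sin u ^ 2) := by
  have hX := one_sub_sq_mul_sin_sq_pos hk
  have hsqrt : Continuous fun u => √(1 - k ^ 2 * sin u ^ 2) := by fun_prop
  have hE : IntervalIntegrable (fun u => √(1 - k ^ 2 * sin u ^ 2))
      MeasureTheory.volume 0 (π / 2) :=
    hsqrt.intervalIntegrable _ _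
  have hK : IntervalIntegrable (fun u => 1 / √(1 - k ^ 2 * sin u ^ 2))
      MeasureTheory.volume 0 (π / 2) :=
    (continuous_const.div hsqrt fun u => (sqrt_pos.2 (hX u)).ne').intervalIntegrable _ _
  unfold ellE ellK
  rw [← integral_sub hE hK, ← integral_const_mul, ← integral_const_mul,
    ← integral_add ((hE.sub hK).const_mul 2) (hK.const_mul _)]
  refine integral_congr fun u _ => ?_
  have hs := sqrt_pos.2 (hX u)
  have hsq := sq_sqrt (hX u).le
  field_simp
  linear_combination 2 * hsq

lemma abs_two_mul_ellE_sub_ellK_add_sq_mul_ellK_le {k : ℝ} (hk : k ^ 2 < 1) :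
    |2 * (ellE k - ellK k) + k ^ 2 * ellK k| ≤ π / 2 * (k ^ 2 / √(1 - k ^ 2)) := by
  have hintegrand : ∀ u ∈ Ι 0 (π / 2),
      ‖k ^ 2 * (1 - 2 * sin u ^ 2) / √(1 - k ^ 2 * sin u ^ 2)‖ ≤ k ^ 2 / √(1 - k ^ 2) := by
    intro u _
    have hsin : |1 - 2 * sin u ^ 2| ≤ 1 :=
      abs_le.2 ⟨by nlinarith [sin_sq_le_one u], by nlinarith [sq_nonneg (sin u)]⟩
    rw [norm_eq_abs, abs_div, abs_mul, abs_of_nonneg (sq_nonneg k),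
      abs_of_pos (sqrt_pos.2 (one_sub_sq_mul_sin_sq_pos hk u))]
    gcongr
    · exact mul_le_of_le_one_right (sq_nonneg k) hsin
    · nlinarith [sin_sq_le_one u, sq_nonneg k]
  calc |2 * (ellE k - ellK k) + k ^ 2 * ellK k|
      ≤ k ^ 2 / √(1 - k ^ 2) * |π / 2 - 0| := by
        rw [two_mul_ellE_sub_ellK_add_sq_mul_ellK hk, ← norm_eq_abs]
        exact norm_integral_le_of_norm_le_const hintegrand
    _ = π / 2 * (k ^ 2 / √(1 - k ^ 2)) := by
        rw [sub_zero, abs_of_pos (by positivity)]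
        ring

lemma abs_two_mul_ellE_sub_ellK_add_sq_mul_ellK_div_le {k : ℝ} (hk : k ^ 2 < 1) :
    |(2 * (ellE k - ellK k) + k ^ 2 * ellK k) / (k * √(1 - k ^ 2) * (1 + √(1 - k ^ 2)))| ≤
      π / 2 * (|k| / (1 - k ^ 2)) := by
  rcases eq_or_ne k 0 with rfl | hk0
  · simp
  have hk' : 0 < 1 - k ^ 2 := by linarith
  have hs : 0 < √(1 - k ^ 2) := sqrt_pos.2 hk'
  have hk0' : 0 < |k| := abs_pos.2 hk0
  calc |(2 * (ellE k - ellK k) + k ^ 2 * ellK k) / (k * √(1 - k ^ 2) * (1 + √(1 - k ^ 2)))|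
      = |2 * (ellE k - ellK k) + k ^ 2 * ellK k| / (|k| * √(1 - k ^ 2) * (1 + √(1 - k ^ 2))) := by
        rw [abs_div, abs_mul, abs_mul, abs_of_pos hs,
          abs_of_pos (by positivity : (0 : ℝ) < 1 + √(1 - k ^ 2))]
    _ ≤ π / 2 * (k ^ 2 / √(1 - k ^ 2)) / (|k| * √(1 - k ^ 2) * 1) := by
        gcongr
        · exact abs_two_mul_ellE_sub_ellK_add_sq_mul_ellK_le hk
        · exact le_add_of_nonneg_right (sqrt_nonneg _)
    _ = π / 2 * (|k| / (1 - k ^ 2)) := by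
        field_simp
        rw [sq_sqrt hk'.le, sq_abs]
        ring

lemma tendsto_two_mul_ellE_sub_ellK_add_sq_mul_ellK_div :
    Tendsto (fun k => (2 * (ellE k - ellK k) + k ^ 2 * ellK k) /
      (k * √(1 - k ^ 2) * (1 + √(1 - k ^ 2)))) (𝓝 0) (𝓝 0) := by
  have hbound : Tendsto (fun k : ℝ => π / 2 * (|k| / (1 - k ^ 2))) (𝓝 0) (𝓝 0) := by
    have hcont : ContinuousAt (fun k : ℝ => π / 2 * (|k| / (1 - k ^ 2))) 0 := by
      fun_prop (disch := norm_num)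
    simpa using hcont.tendsto
  refine squeeze_zero_norm' ?_ hbound
  filter_upwards [Ioo_mem_nhds neg_one_lt_zero one_pos] with k hk
  exact abs_two_mul_ellE_sub_ellK_add_sq_mul_ellK_div_le
    ((sq_lt_one_iff_abs_lt_one k).2 (abs_lt.2 hk))

theorem stmt_18_general (b : ℝ) :
    Tendsto
      (fun k : ℝ =>
        -2 * (2 * (ellE k - ellK k) + k^2 * ellK k) /
          (π * b * k * Real.sqrt (1 - k^2) * (1 + Real.sqrt (1 - k^2))))
      (nhdsWithin 0 (Set.Ioi 0)) (nhds 0) := by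
  have h := (tendsto_two_mul_ellE_sub_ellK_add_sq_mul_ellK_div.mono_left
    (nhdsWithin_le_nhds (s := Set.Ioi 0))).const_mul (-2 / (π * b))
  rw [mul_zero] at h
  exact h.congr fun k => by rw [div_mul_div_comm]; ring

theorem stmt_18 (b : ℝ) (hb : 0 < b) :
    Tendsto
      (fun k : ℝ =>
        -2 * (2 * (ellE k - ellK k) + k^2 * ellK k) /
          (π * b * k * Real.sqrt (1 - k^2) * (1 + Real.sqrt (1 - k^2))))
      (nhdsWithin 0 (Set.Ioi 0)) (nhds 0) :=
  stmt_18_general b
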